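/- Let X be a Banach function space over a finite measure space which has the weak Banach-Saks property, and let m : Σ → X be a σ-additive positive vector measure (m(A) ≥ 0 for all A ∈ Σ). If {hₙ} ⊆ L¹(m) is weakly null and the functions hₙ have pairwise disjoint supports, then there exists a subsequence {h'ₙ} of {hₙ} such that ‖(1/n)∑_{k=1}^n h'ₖ‖_{L¹(m)} → 0 as n → ∞. -/

import Mathlib

open MeasureTheory Filter Topology
open scoped ENNReal

noncomputable section

namespace Paper

variable {Ω : Type*} [MeasurableSpace Ω]
variable {X : Type*} [NormedAddCommGroup X] [NormedSpace ℝ X]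

/-- The signed measure `x* ∘ m` for a functional `x*` and vector measure `m`. -/
def dualApply (m : VectorMeasure Ω X) (x : X →L[ℝ] ℝ) : SignedMeasure Ω :=
  m.mapRange x.toLinearMap.toAddMonoidHom x.continuous

/-- The semivariation `‖m‖(A)` of a vector measure. -/
def semivar (m : VectorMeasure Ω X) (A : Set Ω) : ℝ≥0∞ :=
  ⨆ x : {x : X →L[ℝ] ℝ // ‖x‖ ≤ 1}, (dualApply m x.1).totalVariation A

/-- `P` holds `‖m‖`-almost everywhere. -/
def MAE (m : VectorMeasure Ω X) (P : Ω → Prop) : Prop :=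
  ∃ N : Set Ω, MeasurableSet N ∧ semivar m N = 0 ∧ ∀ ω ∉ N, P ω

/-- The integral `∫_A f ds` of a real function with respect to a signed measure. -/
def sIntegral (s : SignedMeasure Ω) (f : Ω → ℝ) (A : Set Ω) : ℝ :=
  (∫ ω in A, f ω ∂s.toJordanDecomposition.posPart) -
    ∫ ω in A, f ω ∂s.toJordanDecomposition.negPart

/-- `f` is integrable with respect to the vector measure `m` (Bartle-Dunford-Schwartz). -/
def MIntegrable (m : VectorMeasure Ω X) (f : Ω → ℝ) : Prop :=
  Measurable f ∧
  (∀ x : X →L[ℝ] ℝ, Integrable f ((dualApply m x).totalVariation)) ∧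
  (∀ A : Set Ω, MeasurableSet A →
    ∃ v : X, ∀ x : X →L[ℝ] ℝ, x v = sIntegral (dualApply m x) f A)

open Classical in
/-- The vector integral `∫_A f dm ∈ X`. -/
def mIntegral (m : VectorMeasure Ω X) (f : Ω → ℝ) (A : Set Ω) : X :=
  if h : ∃ v : X, ∀ x : X →L[ℝ] ℝ, x v = sIntegral (dualApply m x) f A then h.choose
  else 0

/-- The norm of `L¹(m)`: `‖f‖ = sup_{‖x*‖ ≤ 1} ∫ |f| d|x*m|`. -/
def mNorm (m : VectorMeasure Ω X) (f : Ω → ℝ) : ℝ :=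
  ⨆ x : {x : X →L[ℝ] ℝ // ‖x‖ ≤ 1}, ∫ ω, |f ω| ∂(dualApply m x.1).totalVariation

/-- The vector measure `m` is separable: the pseudometric space `(Σ, d_m)`,
`d_m(A,B) = ‖m‖(A △ B)`, is separable. -/
def SeparableVM (m : VectorMeasure Ω X) : Prop :=
  ∃ D : Set (Set Ω), D.Countable ∧ (∀ B ∈ D, MeasurableSet B) ∧
    ∀ A : Set Ω, MeasurableSet A → ∀ ε : ℝ, 0 < ε →
      ∃ B ∈ D, semivar m (symmDiff A B) < ENNReal.ofReal ε

section FunctionSpace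

variable {S : Type*} [MeasurableSpace S]

/-- `T` is a bounded linear functional on the function space determined by the
membership predicate `mem` and the norm `nrm`. -/
def IsBddLinFunctional (mem : (S → ℝ) → Prop) (nrm : (S → ℝ) → ℝ)
    (T : (S → ℝ) → ℝ) : Prop :=
  (∀ f g, mem f → mem g → T (f + g) = T f + T g) ∧
  (∀ (c : ℝ) (f), mem f → T (c • f) = c * T f) ∧
  (∃ C : ℝ, ∀ f, mem f → |T f| ≤ C * nrm f)

/-- `f` is a weakly null sequence in the function space `(mem, nrm)`. -/
def WeaklyNullSeq (mem : (S → ℝ) → Prop) (nrm : (S → ℝ) → ℝ) (f : ℕ → S → ℝ) : Prop :=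
  ∀ T : (S → ℝ) → ℝ, IsBddLinFunctional mem nrm T →
    Tendsto (fun n => T (f n)) atTop (nhds 0)

/-- The set `K` has uniformly absolutely continuous norm in the function space with
norm `nrm` over the measure `μ`. -/
def UnifACNorm (μ : Measure S) (nrm : (S → ℝ) → ℝ) (K : Set (S → ℝ)) : Prop :=
  ∀ ε : ℝ, 0 < ε → ∃ δ : ℝ, 0 < δ ∧ ∀ A : Set S, MeasurableSet A →
    μ A < ENNReal.ofReal δ → ∀ f ∈ K, nrm (A.indicator f) ≤ ε

/-- The subsequence splitting property for the function space `(mem, nrm)` over `μ`. -/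
def HasSSP (μ : Measure S) (mem : (S → ℝ) → Prop) (nrm : (S → ℝ) → ℝ) : Prop :=
  ∀ f : ℕ → S → ℝ, (∀ n, mem (f n)) → (∃ C : ℝ, ∀ n, nrm (f n) ≤ C) →
    ∃ σ : ℕ → ℕ, StrictMono σ ∧
      ∃ g h : ℕ → S → ℝ,
        (∀ n, mem (g n)) ∧ (∀ n, mem (h n)) ∧
        (∀ n, f (σ n) = g n + h n) ∧
        (∀ n, (fun s => g n s * h n s) =ᵐ[μ] 0) ∧
        UnifACNorm μ nrm (Set.range g) ∧
        (∀ i j, i ≠ j → (fun s => h i s * h j s) =ᵐ[μ] 0)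

/-- The weak Banach-Saks property for the function space `(mem, nrm)`. -/
def HasWBS (mem : (S → ℝ) → Prop) (nrm : (S → ℝ) → ℝ) : Prop :=
  ∀ f : ℕ → S → ℝ, (∀ n, mem (f n)) → WeaklyNullSeq mem nrm f →
    ∃ σ : ℕ → ℕ, StrictMono σ ∧
      Tendsto (fun n : ℕ => nrm ((n : ℝ)⁻¹ • ∑ k ∈ Finset.range n, f (σ k))) atTop (nhds 0)

end FunctionSpace

/-- A Banach function space over `(S, μ)`: an (abstract) normed space `X` together with
a linear embedding `J` into measurable functions on `S`, separating points modulo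
`μ`-null sets and satisfying the ideal property. -/
structure BFS (S : Type*) [MeasurableSpace S] (μ : Measure S)
    (X : Type*) [NormedAddCommGroup X] [NormedSpace ℝ X] where
  J : X →ₗ[ℝ] (S → ℝ)
  aemeasurable : ∀ x : X, AEMeasurable (J x) μ
  eq_zero : ∀ x : X, J x =ᵐ[μ] 0 → x = 0
  ideal : ∀ (x : X) (g : S → ℝ), AEMeasurable g μ →
    (∀ᵐ s ∂μ, |g s| ≤ |J x s|) → ∃ y : X, J y =ᵐ[μ] g ∧ ‖y‖ ≤ ‖x‖

variable {S : Type*} [MeasurableSpace S] {μ : Measure S}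

/-- The set `K ⊆ X` has uniformly absolutely continuous norm in the B.f.s. `X`. -/
def BFS.UnifAC (B : BFS S μ X) (K : Set X) : Prop :=
  ∀ ε : ℝ, 0 < ε → ∃ δ : ℝ, 0 < δ ∧ ∀ A : Set S, MeasurableSet A →
    μ A < ENNReal.ofReal δ → ∀ x ∈ K, ∀ y : X, B.J y =ᵐ[μ] A.indicator (B.J x) → ‖y‖ ≤ ε

/-- The B.f.s. `X` has absolutely continuous norm. -/
def BFS.ACNorm (B : BFS S μ X) : Prop :=
  ∀ x : X, ∀ ε : ℝ, 0 < ε → ∃ δ : ℝ, 0 < δ ∧ ∀ A : Set S, MeasurableSet A →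
    μ A < ENNReal.ofReal δ → ∀ y : X, B.J y =ᵐ[μ] A.indicator (B.J x) → ‖y‖ ≤ ε

/-- The subsequence splitting property for the B.f.s. `X`. -/
def BFS.SSP (B : BFS S μ X) : Prop :=
  ∀ f : ℕ → X, (∃ C : ℝ, ∀ n, ‖f n‖ ≤ C) →
    ∃ σ : ℕ → ℕ, StrictMono σ ∧
      ∃ g h : ℕ → X,
        (∀ n, f (σ n) = g n + h n) ∧
        (∀ n, (fun s => B.J (g n) s * B.J (h n) s) =ᵐ[μ] 0) ∧
        B.UnifAC (Set.range g) ∧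
        (∀ i j, i ≠ j → (fun s => B.J (h i) s * B.J (h j) s) =ᵐ[μ] 0)

/-- The weak Banach-Saks property for a normed space `Z`: every weakly null sequence has a
subsequence whose arithmetic means converge to zero in norm. -/
def WeakBanachSaks (Z : Type*) [NormedAddCommGroup Z] [NormedSpace ℝ Z] : Prop :=
  ∀ z : ℕ → Z, (∀ φ : Z →L[ℝ] ℝ, Tendsto (fun n => φ (z n)) atTop (nhds 0)) →
    ∃ σ : ℕ → ℕ, StrictMono σ ∧
      Tendsto (fun n : ℕ => ‖(n : ℝ)⁻¹ • ∑ k ∈ Finset.range n, z (σ k)‖) atTop (nhds 0)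

/-!
Put `E = {∃ n, hₙ > 0}` and `F = {∃ n, hₙ < 0}`. Off an `m`-null set the `hₙ` have disjoint
supports, so `x*(∫_E hₙ dm - ∫_F hₙ dm) = ∫ |hₙ| d|x*m|`, and `f ↦ x*(∫_E f dm - ∫_F f dm)` is
a bounded functional on `L¹(m)`. Hence `xₙ = ∫ |hₙ| dm` is weakly null in `X`, and the weak
Banach-Saks property gives a subsequence with `‖(1/n) ∑ x_{σ k}‖ → 0`.

Since `m` is positive, `∫_A u dm` lies in the positive cone of `X` for every `u ≥ 0`, so the
lattice norm gives `‖∫_A u dm‖ ≤ ‖∫_Ω u dm‖`. Splitting `∫ |u| d|x*m|` along a Hahn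
decomposition of `x*m` then yields `‖u‖_{L¹(m)} ≤ 2 ‖∫_Ω u dm‖`, which we apply to
`u = (1/n) ∑ |h_{σ k}|`, a majorant of `|(1/n) ∑ h_{σ k}|`.
-/

lemma abs_setIntegral_le_integral_abs {ν : Measure Ω} {f : Ω → ℝ} (hf : Integrable f ν)
    (A : Set Ω) : |∫ ω in A, f ω ∂ν| ≤ ∫ ω, |f ω| ∂ν :=
  (abs_integral_le_integral_abs).trans
    (integral_mono_measure Measure.restrict_le_self (.of_forall fun _ => abs_nonneg _) hf.abs)

lemma setIntegral_sub_setIntegral_compl_eq_integral_abs {ν : Measure Ω} {f : Ω → ℝ}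
    (hf : Integrable f ν) {A : Set Ω} (hA : MeasurableSet A)
    (hAf : ∀ᵐ ω ∂ν, ω ∈ A ↔ 0 ≤ f ω) :
    ∫ ω in A, f ω ∂ν - ∫ ω in Aᶜ, f ω ∂ν = ∫ ω, |f ω| ∂ν := by
  have hpos : ∫ ω in A, |f ω| ∂ν = ∫ ω in A, f ω ∂ν := by
    refine setIntegral_congr_ae hA ?_
    filter_upwards [hAf] with ω hω hωA using abs_of_nonneg (hω.1 hωA)
  have hneg : ∫ ω in Aᶜ, |f ω| ∂ν = -∫ ω in Aᶜ, f ω ∂ν := by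
    rw [← integral_neg]
    refine setIntegral_congr_ae hA.compl ?_
    filter_upwards [hAf] with ω hω hωA using abs_of_neg (not_le.1 (mt hω.2 hωA))
  rw [← integral_add_compl hA hf.abs, hpos, hneg, sub_eq_add_neg]

section SignedIntegral

variable (s : SignedMeasure Ω)

lemma posPart_le_totalVariation : s.toJordanDecomposition.posPart ≤ s.totalVariation :=
  Measure.le_add_right le_rfl

lemma negPart_le_totalVariation : s.toJordanDecomposition.negPart ≤ s.totalVariation :=
  Measure.le_add_left le_rfl

lemma negPart_eq_zero_of_nonneg (hs : ∀ A, MeasurableSet A → 0 ≤ s A) :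
    s.toJordanDecomposition.negPart = 0 := by
  obtain ⟨i, hi, -, hi', -, hneg⟩ := s.toJordanDecomposition_spec
  ext A hA
  rw [hneg, SignedMeasure.toMeasureOfLEZero_apply _ _ hi.compl hA, Measure.coe_zero,
    Pi.zero_apply, ENNReal.coe_eq_zero, ← NNReal.coe_eq_zero, NNReal.coe_mk, neg_eq_zero]
  exact le_antisymm (VectorMeasure.nonpos_of_restrict_le_zero _
    (VectorMeasure.restrict_le_zero_subset _ hi.compl Set.inter_subset_left hi'))
    (hs _ (hi.compl.inter hA))

variable {s}

lemma sIntegral_add {f g : Ω → ℝ} (hf : Integrable f s.totalVariation)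
    (hg : Integrable g s.totalVariation) (A : Set Ω) :
    sIntegral s (f + g) A = sIntegral s f A + sIntegral s g A := by
  simp only [sIntegral, Pi.add_apply]
  rw [integral_add (hf.mono_measure (posPart_le_totalVariation s)).restrict
      (hg.mono_measure (posPart_le_totalVariation s)).restrict,
    integral_add (hf.mono_measure (negPart_le_totalVariation s)).restrict
      (hg.mono_measure (negPart_le_totalVariation s)).restrict]
  ring

lemma sIntegral_smul (c : ℝ) (f : Ω → ℝ) (A : Set Ω) :
    sIntegral s (c • f) A = c * sIntegral s f A := by
  simp only [sIntegral, Pi.smul_apply, smul_eq_mul, integral_const_mul]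
  ring

lemma sIntegral_finsetSum {ι : Type*} (t : Finset ι) {f : ι → Ω → ℝ}
    (hf : ∀ i ∈ t, Integrable (f i) s.totalVariation) (A : Set Ω) :
    sIntegral s (∑ i ∈ t, f i) A = ∑ i ∈ t, sIntegral s (f i) A := by
  simp only [sIntegral, Finset.sum_apply]
  rw [integral_finsetSum _ fun i hi =>
      ((hf i hi).mono_measure (posPart_le_totalVariation s)).restrict,
    integral_finsetSum _ fun i hi =>
      ((hf i hi).mono_measure (negPart_le_totalVariation s)).restrict,
    Finset.sum_sub_distrib]

lemma sIntegral_add_compl {f : Ω → ℝ} (hf : Integrable f s.totalVariation) {A : Set Ω}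
    (hA : MeasurableSet A) : sIntegral s f A + sIntegral s f Aᶜ = sIntegral s f Set.univ := by
  simp only [sIntegral, Measure.restrict_univ]
  rw [← integral_add_compl hA (hf.mono_measure (posPart_le_totalVariation s)),
    ← integral_add_compl hA (hf.mono_measure (negPart_le_totalVariation s))]
  ring

lemma abs_sIntegral_le {f : Ω → ℝ} (hf : Integrable f s.totalVariation) (A : Set Ω) :
    |sIntegral s f A| ≤ ∫ ω, |f ω| ∂s.totalVariation := by
  have hp := hf.mono_measure (posPart_le_totalVariation s)
  have hn := hf.mono_measure (negPart_le_totalVariation s)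
  rw [SignedMeasure.totalVariation, integral_add_measure hp.abs hn.abs]
  exact (abs_sub _ _).trans
    (add_le_add (abs_setIntegral_le_integral_abs hp A) (abs_setIntegral_le_integral_abs hn A))

/-- Taking `A` to be `{f ≥ 0}` on the positive Hahn set and `{f < 0}` on the negative one. -/
lemma exists_sIntegral_sub_compl_eq_integral_abs {f : Ω → ℝ} (hfm : Measurable f)
    (hf : Integrable f s.totalVariation) :
    ∃ A, MeasurableSet A ∧
      sIntegral s f A - sIntegral s f Aᶜ = ∫ ω, |f ω| ∂s.totalVariation := by
  obtain ⟨t, ht, hpt, hnt⟩ := s.toJordanDecomposition.mutuallySingular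
  have hP : MeasurableSet {ω | 0 ≤ f ω} := measurableSet_le measurable_const hfm
  have hp := hf.mono_measure (posPart_le_totalVariation s)
  have hn := hf.mono_measure (negPart_le_totalVariation s)
  refine ⟨symmDiff {ω | 0 ≤ f ω} t, hP.symmDiff ht, ?_⟩
  have hApos : ∀ᵐ ω ∂s.toJordanDecomposition.posPart,
      ω ∈ symmDiff {ω | 0 ≤ f ω} t ↔ 0 ≤ f ω := by
    filter_upwards [measure_eq_zero_iff_ae_notMem.1 hpt] with ω hω
    simp [Set.mem_symmDiff, hω]
  have hAneg : ∀ᵐ ω ∂s.toJordanDecomposition.negPart,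
      ω ∈ (symmDiff {ω | 0 ≤ f ω} t)ᶜ ↔ 0 ≤ f ω := by
    filter_upwards [measure_eq_zero_iff_ae_notMem.1 hnt] with ω hω
    simp only [Set.mem_compl_iff, not_not] at hω
    simp [hω]
  have h1 := setIntegral_sub_setIntegral_compl_eq_integral_abs hp (hP.symmDiff ht) hApos
  have h2 := setIntegral_sub_setIntegral_compl_eq_integral_abs hn (hP.symmDiff ht).compl hAneg
  rw [compl_compl] at h2
  rw [SignedMeasure.totalVariation, integral_add_measure hp.abs hn.abs, ← h1, ← h2, sIntegral,
    sIntegral]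
  ring

lemma sIntegral_abs {f : Ω → ℝ} (hfm : Measurable f) (hf : Integrable f s.totalVariation)
    (A : Set Ω) :
    sIntegral s (fun ω => |f ω|) A =
      sIntegral s f ({ω | 0 ≤ f ω} ∩ A) - sIntegral s f ({ω | f ω ≤ 0} ∩ A) := by
  have key : ∀ ν : Measure Ω, Integrable f ν → ∫ ω in A, |f ω| ∂ν =
      ∫ ω in {ω | 0 ≤ f ω} ∩ A, f ω ∂ν - ∫ ω in {ω | f ω ≤ 0} ∩ A, f ω ∂ν := fun ν hν => by
    rw [← Measure.restrict_restrict (measurableSet_le measurable_const hfm),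
      ← Measure.restrict_restrict (measurableSet_le hfm measurable_const),
      ← integral_norm_eq_pos_sub_neg hν.restrict]
    rfl
  simp only [sIntegral]
  rw [key _ (hf.mono_measure (posPart_le_totalVariation s)),
    key _ (hf.mono_measure (negPart_le_totalVariation s))]
  ring

lemma sIntegral_sub_eq_of_ae {f g : Ω → ℝ} (hf : Integrable f s.totalVariation) {E F : Set Ω}
    (hE : MeasurableSet E) (hF : MeasurableSet F)
    (hfg : ∀ᵐ ω ∂s.totalVariation, E.indicator f ω - F.indicator f ω = g ω) :
    sIntegral s f E - sIntegral s f F = sIntegral s g Set.univ := by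
  have key : ∀ ν : Measure Ω, ν ≤ s.totalVariation →
      ∫ ω in E, f ω ∂ν - ∫ ω in F, f ω ∂ν = ∫ ω, g ω ∂ν := fun ν hν => by
    have hfν := hf.mono_measure hν
    rw [← integral_indicator hE, ← integral_indicator hF,
      ← integral_sub (hfν.indicator hE) (hfν.indicator hF)]
    exact integral_congr_ae (ae_mono hν hfg)
  simp only [sIntegral, Measure.restrict_univ]
  rw [← key _ (posPart_le_totalVariation s), ← key _ (negPart_le_totalVariation s)]
  ring

lemma sIntegral_nonneg (hs : ∀ A, MeasurableSet A → 0 ≤ s A) {f : Ω → ℝ} (hf : 0 ≤ f)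
    (A : Set Ω) : 0 ≤ sIntegral s f A := by
  simp only [sIntegral, negPart_eq_zero_of_nonneg s hs, Measure.restrict_zero,
    integral_zero_measure, sub_zero]
  exact integral_nonneg hf

end SignedIntegral

section VectorMeasure

variable (m : VectorMeasure Ω X)

lemma dualApply_apply (x : X →L[ℝ] ℝ) (A : Set Ω) : dualApply m x A = x (m A) :=
  VectorMeasure.mapRange_apply _ x.continuous

lemma totalVariation_dualApply_smul (y : X →L[ℝ] ℝ) {c : ℝ} (hc : 0 ≤ c) :
    (dualApply m (c • y)).totalVariation = ENNReal.ofReal c • (dualApply m y).totalVariation := by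
  have hsmul : dualApply m (c • y) = c • dualApply m y := by
    ext A hA
    rw [smul_apply, dualApply_apply, dualApply_apply]
    rfl
  rw [hsmul, SignedMeasure.totalVariation, SignedMeasure.toJordanDecomposition_smul_real,
    JordanDecomposition.real_smul_posPart_nonneg _ _ hc,
    JordanDecomposition.real_smul_negPart_nonneg _ _ hc, ← smul_add]
  rfl

lemma exists_totalVariation_dualApply_eq_smul (x : X →L[ℝ] ℝ) :
    ∃ y : X →L[ℝ] ℝ, ‖y‖ ≤ 1 ∧
      (dualApply m x).totalVariation = ENNReal.ofReal ‖x‖ • (dualApply m y).totalVariation := by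
  refine ⟨‖x‖⁻¹ • x, ?_, ?_⟩
  · rcases eq_or_ne x 0 with rfl | hx
    · simp
    · rw [norm_smul, norm_inv, norm_norm, inv_mul_cancel₀ (norm_ne_zero_iff.2 hx)]
  · rw [← totalVariation_dualApply_smul m _ (norm_nonneg x)]
    rcases eq_or_ne x 0 with rfl | hx
    · simp
    · rw [smul_inv_smul₀ (norm_ne_zero_iff.2 hx)]

variable {m}

lemma totalVariation_dualApply_eq_zero {N : Set Ω} (hN : semivar m N = 0) (x : X →L[ℝ] ℝ) :
    (dualApply m x).totalVariation N = 0 := by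
  obtain ⟨y, hy, hxy⟩ := exists_totalVariation_dualApply_eq_smul m x
  rw [hxy, Measure.smul_apply, ENNReal.iSup_eq_zero.1 hN ⟨y, hy⟩, smul_zero]

lemma MAE.ae_totalVariation {P : Ω → Prop} (hP : MAE m P) (x : X →L[ℝ] ℝ) :
    ∀ᵐ ω ∂(dualApply m x).totalVariation, P ω := by
  obtain ⟨N, -, hN, hPN⟩ := hP
  exact measure_mono_null (fun ω hω => not_not.1 (mt (hPN ω) hω))
    (totalVariation_dualApply_eq_zero hN x)

end VectorMeasure

section MIntegrable

variable {m : VectorMeasure Ω X}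

lemma dual_mIntegral {f : Ω → ℝ} (hf : MIntegrable m f) {A : Set Ω} (hA : MeasurableSet A)
    (x : X →L[ℝ] ℝ) : x (mIntegral m f A) = sIntegral (dualApply m x) f A := by
  rw [mIntegral, dif_pos (hf.2.2 A hA)]
  exact (hf.2.2 A hA).choose_spec x

lemma mIntegral_eq_of_dual {f : Ω → ℝ} (hf : MIntegrable m f) {A : Set Ω}
    (hA : MeasurableSet A) {v : X} (hv : ∀ x : X →L[ℝ] ℝ, x v = sIntegral (dualApply m x) f A) :
    mIntegral m f A = v :=
  SeparatingDual.eq_iff_forall_dual_eq.2 fun x => by rw [dual_mIntegral hf hA, hv]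

lemma mIntegral_add_compl {f : Ω → ℝ} (hf : MIntegrable m f) {A : Set Ω}
    (hA : MeasurableSet A) : mIntegral m f A + mIntegral m f Aᶜ = mIntegral m f Set.univ :=
  (mIntegral_eq_of_dual hf MeasurableSet.univ fun x => by
    rw [map_add, dual_mIntegral hf hA, dual_mIntegral hf hA.compl,
      sIntegral_add_compl (hf.2.1 x) hA]).symm

lemma MIntegrable.smul {f : Ω → ℝ} (hf : MIntegrable m f) (c : ℝ) : MIntegrable m (c • f) :=
  ⟨hf.1.const_smul c, fun x => (hf.2.1 x).smul c, fun A hA => ⟨c • mIntegral m f A, fun x => by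
    rw [map_smul, dual_mIntegral hf hA, sIntegral_smul, smul_eq_mul]⟩⟩

lemma MIntegrable.finsetSum {ι : Type*} (t : Finset ι) {f : ι → Ω → ℝ}
    (hf : ∀ i ∈ t, MIntegrable m (f i)) : MIntegrable m (∑ i ∈ t, f i) :=
  ⟨(Finset.stronglyMeasurable_sum t fun i hi => (hf i hi).1.stronglyMeasurable).measurable,
    fun x => integrable_finsetSum' _ fun i hi => (hf i hi).2.1 x,
    fun A hA => ⟨∑ i ∈ t, mIntegral m (f i) A, fun x => by
      rw [map_sum, sIntegral_finsetSum _ fun i hi => (hf i hi).2.1 x]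
      exact Finset.sum_congr rfl fun i hi => dual_mIntegral (hf i hi) hA x⟩⟩

lemma MIntegrable.abs {f : Ω → ℝ} (hf : MIntegrable m f) : MIntegrable m fun ω => |f ω| :=
  ⟨hf.1.abs, fun x => (hf.2.1 x).abs, fun A hA =>
    ⟨mIntegral m f ({ω | 0 ≤ f ω} ∩ A) - mIntegral m f ({ω | f ω ≤ 0} ∩ A), fun x => by
      rw [map_sub, dual_mIntegral hf ((measurableSet_le measurable_const hf.1).inter hA),
        dual_mIntegral hf ((measurableSet_le hf.1 measurable_const).inter hA),
        sIntegral_abs hf.1 (hf.2.1 x)]⟩⟩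

lemma mIntegral_smul_finsetSum {ι : Type*} (t : Finset ι) {f : ι → Ω → ℝ}
    (hf : ∀ i ∈ t, MIntegrable m (f i)) (c : ℝ) {A : Set Ω} (hA : MeasurableSet A) :
    mIntegral m (c • ∑ i ∈ t, f i) A = c • ∑ i ∈ t, mIntegral m (f i) A := by
  refine mIntegral_eq_of_dual ((MIntegrable.finsetSum t hf).smul c) hA fun x => ?_
  rw [map_smul, map_sum, sIntegral_smul, sIntegral_finsetSum _ fun i hi => (hf i hi).2.1 x,
    smul_eq_mul]
  exact congrArg _ (Finset.sum_congr rfl fun i hi => dual_mIntegral (hf i hi) hA x)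

end MIntegrable

lemma exists_abs_dual_le_of_forall_dual_bounded {ι : Type*} (v : ι → X)
    (hv : ∀ x : X →L[ℝ] ℝ, ∃ C, ∀ i, |x (v i)| ≤ C) :
    ∃ C, ∀ i (x : X →L[ℝ] ℝ), ‖x‖ ≤ 1 → |x (v i)| ≤ C := by
  obtain ⟨C, hC⟩ := banach_steinhaus (g := fun i => NormedSpace.inclusionInDoubleDual ℝ X (v i))
    fun x => hv x
  exact ⟨C, fun i x hx =>
    ((NormedSpace.inclusionInDoubleDual ℝ X (v i)).le_of_opNorm_le (hC i) x).trans
      (mul_le_of_le_one_right ((norm_nonneg _).trans (hC i)) hx)⟩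

section MNorm

variable {m : VectorMeasure Ω X}

lemma mNorm_nonneg (f : Ω → ℝ) : 0 ≤ mNorm m f :=
  Real.iSup_nonneg fun _ => integral_nonneg fun _ => abs_nonneg _

/-- Since the set function `A ↦ ∫_A f dm` is weakly bounded, it is norm bounded by the
uniform boundedness principle. -/
lemma bddAbove_integral_abs_totalVariation {f : Ω → ℝ} (hf : MIntegrable m f) :
    BddAbove (Set.range fun x : {x : X →L[ℝ] ℝ // ‖x‖ ≤ 1} =>
      ∫ ω, |f ω| ∂(dualApply m x.1).totalVariation) := by
  obtain ⟨C, hC⟩ := exists_abs_dual_le_of_forall_dual_bounded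
    (fun A : {A : Set Ω // MeasurableSet A} => mIntegral m f A) fun x =>
      ⟨∫ ω, |f ω| ∂(dualApply m x).totalVariation, fun A => by
        rw [dual_mIntegral hf A.2]
        exact abs_sIntegral_le (hf.2.1 x) A⟩
  refine ⟨2 * C, Set.forall_mem_range.2 fun x => ?_⟩
  obtain ⟨A, hA, hAeq⟩ :=
    exists_sIntegral_sub_compl_eq_integral_abs hf.1 (hf.2.1 x.1)
  rw [← hAeq, ← dual_mIntegral hf hA, ← dual_mIntegral hf hA.compl, two_mul]
  exact ((le_abs_self _).trans (abs_sub _ _)).trans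
    (add_le_add (hC ⟨A, hA⟩ x.1 x.2) (hC ⟨Aᶜ, hA.compl⟩ x.1 x.2))

lemma integral_abs_le_norm_mul_mNorm {f : Ω → ℝ} (hf : MIntegrable m f) (x : X →L[ℝ] ℝ) :
    ∫ ω, |f ω| ∂(dualApply m x).totalVariation ≤ ‖x‖ * mNorm m f := by
  obtain ⟨y, hy, hxy⟩ := exists_totalVariation_dualApply_eq_smul m x
  rw [hxy, integral_smul_measure, ENNReal.toReal_ofReal (norm_nonneg x), smul_eq_mul]
  exact mul_le_mul_of_nonneg_left
    (le_ciSup (bddAbove_integral_abs_totalVariation hf) ⟨y, hy⟩) (norm_nonneg x)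

lemma mNorm_mono {f g : Ω → ℝ} (hg : MIntegrable m g) (hfg : ∀ ω, |f ω| ≤ |g ω|) :
    mNorm m f ≤ mNorm m g :=
  ciSup_mono (bddAbove_integral_abs_totalVariation hg) fun x =>
    integral_mono_of_nonneg (.of_forall fun _ => abs_nonneg _) (hg.2.1 x.1).abs
      (.of_forall hfg)

end MNorm

namespace BFS

variable (B : BFS S μ X)

lemma eq_of_ae_eq {v w : X} (h : B.J v =ᵐ[μ] B.J w) : v = w :=
  sub_eq_zero.1 <| B.eq_zero _ <| by
    filter_upwards [h] with s hs
    simp [hs]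

lemma norm_le_of_abs_le {v w : X} (h : ∀ᵐ s ∂μ, |B.J v s| ≤ |B.J w s|) : ‖v‖ ≤ ‖w‖ := by
  obtain ⟨u, hu, huw⟩ := B.ideal w (B.J v) (B.aemeasurable v) h
  rwa [← B.eq_of_ae_eq hu]

def posCone : ProperCone ℝ X where
  carrier := {v | ∀ᵐ s ∂μ, 0 ≤ B.J v s}
  add_mem' {v w} hv hw := by
    change ∀ᵐ s ∂μ, 0 ≤ B.J (v + w) s
    filter_upwards [hv, hw] with s h1 h2
    simpa using add_nonneg h1 h2
  zero_mem' := show ∀ᵐ s ∂μ, 0 ≤ B.J 0 s from .of_forall fun s => by simp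
  smul_mem' c v hv := by
    change ∀ᵐ s ∂μ, 0 ≤ B.J (c • v) s
    filter_upwards [hv] with s h1
    rw [show c • v = (c : ℝ) • v from rfl, map_smul, Pi.smul_apply, smul_eq_mul]
    exact mul_nonneg c.2 h1
  isClosed' := by
    -- the negative part of `J p` is dominated by `|J (p - y)|` for every `y` in the cone
    refine IsSeqClosed.isClosed fun {y p} hy hyp => ?_
    set g : S → ℝ := fun s => max (-B.J p s) 0
    have hdom : ∀ n, ∀ᵐ s ∂μ, |g s| ≤ |B.J (p - y n) s| := fun n => by
      filter_upwards [hy n] with s hs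
      rw [map_sub, Pi.sub_apply, abs_of_nonneg (le_max_right _ _)]
      exact max_le ((neg_le_neg (sub_le_self _ hs)).trans (neg_le_abs _)) (abs_nonneg _)
    obtain ⟨z, hz, -⟩ :=
      B.ideal (p - y 0) g ((B.aemeasurable p).neg.max aemeasurable_const) (hdom 0)
    have hz0 : z = 0 := by
      refine norm_le_zero_iff.1 <| ge_of_tendsto (tendsto_iff_norm_sub_tendsto_zero.1 hyp) <|
        .of_forall fun n => ?_
      rw [norm_sub_rev]
      refine B.norm_le_of_abs_le ?_
      filter_upwards [hz, hdom n] with s h1 h2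
      rwa [h1]
    filter_upwards [hz] with s hs
    rw [hz0, map_zero, Pi.zero_apply] at hs
    exact neg_nonpos.1 (hs ▸ le_max_left _ _)

lemma norm_le_of_mem_posCone {v w : X} (hv : v ∈ B.posCone) (hwv : w - v ∈ B.posCone) :
    ‖v‖ ≤ ‖w‖ := by
  refine B.norm_le_of_abs_le ?_
  filter_upwards [hv, hwv] with s h1 h2
  rw [map_sub, Pi.sub_apply, sub_nonneg] at h2
  rw [abs_of_nonneg h1, abs_of_nonneg (h1.trans h2)]
  exact h2

end BFS

section PositiveMeasure

variable {m : VectorMeasure Ω X} {C : ProperCone ℝ X} {u : Ω → ℝ}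

/-- Every functional `φ ≥ 0` on `C` turns `m` into a positive measure `φ ∘ m`, and `C` is the
set of points where all such `φ` are nonnegative (Farkas' lemma). -/
lemma mIntegral_mem_of_nonneg (hm : ∀ A, MeasurableSet A → m A ∈ C) (hu : MIntegrable m u)
    (hu0 : 0 ≤ u) {A : Set Ω} (hA : MeasurableSet A) : mIntegral m u A ∈ C := by
  by_contra hnot
  obtain ⟨φ, hφC, hφ⟩ := C.hyperplane_separation_point hnot
  rw [dual_mIntegral hu hA] at hφ
  refine hφ.not_ge (sIntegral_nonneg (fun D hD => ?_) hu0 A)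
  rw [dualApply_apply]
  exact hφC _ (hm D hD)

lemma norm_mIntegral_le_norm_mIntegral_univ (hm : ∀ A, MeasurableSet A → m A ∈ C)
    (hC : ∀ v w, v ∈ C → w - v ∈ C → ‖v‖ ≤ ‖w‖) (hu : MIntegrable m u) (hu0 : 0 ≤ u) {A : Set Ω}
    (hA : MeasurableSet A) :
    ‖mIntegral m u A‖ ≤ ‖mIntegral m u Set.univ‖ := by
  refine hC _ _ (mIntegral_mem_of_nonneg hm hu hu0 hA) ?_
  rw [← mIntegral_add_compl hu hA, add_sub_cancel_left]
  exact mIntegral_mem_of_nonneg hm hu hu0 hA.compl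

lemma mNorm_le_two_mul_norm_mIntegral_univ (hm : ∀ A, MeasurableSet A → m A ∈ C)
    (hC : ∀ v w, v ∈ C → w - v ∈ C → ‖v‖ ≤ ‖w‖) (hu : MIntegrable m u) (hu0 : 0 ≤ u) :
    mNorm m u ≤ 2 * ‖mIntegral m u Set.univ‖ := by
  refine Real.iSup_le (fun x => ?_) (by positivity)
  obtain ⟨A, hA, hAeq⟩ := exists_sIntegral_sub_compl_eq_integral_abs hu.1 (hu.2.1 x.1)
  have hx : ∀ v : X, |x.1 v| ≤ ‖v‖ := fun v =>
    (x.1.le_of_opNorm_le x.2 v).trans_eq (one_mul _)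
  rw [← hAeq, ← dual_mIntegral hu hA, ← dual_mIntegral hu hA.compl, two_mul]
  calc x.1 (mIntegral m u A) - x.1 (mIntegral m u Aᶜ)
      ≤ ‖mIntegral m u A‖ + ‖mIntegral m u Aᶜ‖ :=
        ((le_abs_self _).trans (abs_sub _ _)).trans (add_le_add (hx _) (hx _))
    _ ≤ _ := add_le_add (norm_mIntegral_le_norm_mIntegral_univ hm hC hu hu0 hA)
        (norm_mIntegral_le_norm_mIntegral_univ hm hC hu hu0 hA.compl)

end PositiveMeasure

section WeaklyNull

variable {m : VectorMeasure Ω X}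

lemma isBddLinFunctional_sIntegral_sub (x : X →L[ℝ] ℝ) (E F : Set Ω) :
    IsBddLinFunctional (MIntegrable m) (mNorm m)
      (fun f => sIntegral (dualApply m x) f E - sIntegral (dualApply m x) f F) := by
  refine ⟨fun f g hf hg => ?_, fun c f _ => ?_, 2 * ‖x‖, fun f hf => ?_⟩
  · simp only [sIntegral_add (hf.2.1 x) (hg.2.1 x)]
    ring
  · simp only [sIntegral_smul]
    ring
  · have hE := abs_sIntegral_le (hf.2.1 x) E
    have hF := abs_sIntegral_le (hf.2.1 x) F
    have hfx := integral_abs_le_norm_mul_mNorm hf x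
    linarith [abs_sub (sIntegral (dualApply m x) f E) (sIntegral (dualApply m x) f F)]

lemma indicator_sub_indicator_eq_abs {α : Type*} (h : ℕ → α → ℝ) {ω : α}
    (hω : ∀ i j, i ≠ j → h i ω * h j ω = 0) (k : ℕ) :
    {ω | ∃ n, 0 < h n ω}.indicator (h k) ω - {ω | ∃ n, h n ω < 0}.indicator (h k) ω =
      |h k ω| := by
  have honly : ∀ n, h n ω ≠ 0 → h k ω ≠ 0 → n = k := fun n hn hk =>
    not_not.1 fun hnk => mul_ne_zero hn hk (hω n k hnk)
  rcases lt_trichotomy (h k ω) 0 with hneg | hzero | hpos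
  · have hE : ω ∉ {ω | ∃ n, 0 < h n ω} := fun ⟨n, hn⟩ => by
      obtain rfl := honly n hn.ne' hneg.ne
      exact hn.not_gt hneg
    rw [Set.indicator_of_notMem hE,
      Set.indicator_of_mem (show ω ∈ {ω | ∃ n, h n ω < 0} from ⟨k, hneg⟩), abs_of_neg hneg,
      zero_sub]
  · rw [Set.indicator_apply_eq_zero.2 fun _ => hzero,
      Set.indicator_apply_eq_zero.2 fun _ => hzero, hzero, sub_zero, abs_zero]
  · have hF : ω ∉ {ω | ∃ n, h n ω < 0} := fun ⟨n, hn⟩ => by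
      obtain rfl := honly n hn.ne hpos.ne'
      exact hn.not_gt hpos
    rw [Set.indicator_of_mem (show ω ∈ {ω | ∃ n, 0 < h n ω} from ⟨k, hpos⟩),
      Set.indicator_of_notMem hF, abs_of_pos hpos, sub_zero]

lemma tendsto_dual_mIntegral_abs {h : ℕ → Ω → ℝ} (hh : ∀ n, MIntegrable m (h n))
    (hwn : WeaklyNullSeq (MIntegrable m) (mNorm m) h)
    (hdisj : ∀ i j, i ≠ j → MAE m (fun ω => h i ω * h j ω = 0)) (φ : X →L[ℝ] ℝ) :
    Tendsto (fun k => φ (mIntegral m (fun ω => |h k ω|) Set.univ)) atTop (𝓝 0) := by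
  have hE : MeasurableSet {ω | ∃ n, 0 < h n ω} := by
    simp only [Set.ofPred_exists]
    exact .iUnion fun n => measurableSet_lt measurable_const (hh n).1
  have hF : MeasurableSet {ω | ∃ n, h n ω < 0} := by
    simp only [Set.ofPred_exists]
    exact .iUnion fun n => measurableSet_lt (hh n).1 measurable_const
  have hae : ∀ᵐ ω ∂(dualApply m φ).totalVariation, ∀ i j, i ≠ j → h i ω * h j ω = 0 := by
    refine ae_all_iff.2 fun i => ae_all_iff.2 fun j => ?_
    rcases eq_or_ne i j with rfl | hij
    · exact .of_forall fun _ hii => absurd rfl hii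
    · exact ((hdisj i j hij).ae_totalVariation φ).mono fun _ hω _ => hω
  refine (hwn _ (isBddLinFunctional_sIntegral_sub φ {ω | ∃ n, 0 < h n ω}
    {ω | ∃ n, h n ω < 0})).congr fun k => ?_
  rw [dual_mIntegral (hh k).abs .univ]
  exact sIntegral_sub_eq_of_ae ((hh k).2.1 φ) hE hF
    (hae.mono fun ω hω => indicator_sub_indicator_eq_abs h hω k)

end WeaklyNull

theorem statement10_general
    {S : Type*} [MeasurableSpace S] {μ : Measure S}
    {X : Type*} [NormedAddCommGroup X] [NormedSpace ℝ X]
    (B : BFS S μ X) (hWBS : WeakBanachSaks X)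
    {Ω : Type*} [MeasurableSpace Ω] (m : VectorMeasure Ω X)
    (hpos : ∀ A : Set Ω, MeasurableSet A → ∀ᵐ s ∂μ, 0 ≤ B.J (m A) s)
    (h : ℕ → Ω → ℝ) (hh : ∀ n, MIntegrable m (h n))
    (hwn : WeaklyNullSeq (MIntegrable m) (mNorm m) h)
    (hdisj : ∀ i j, i ≠ j → MAE m (fun ω => h i ω * h j ω = 0)) :
    ∃ σ : ℕ → ℕ, StrictMono σ ∧
      Tendsto (fun n : ℕ => mNorm m ((n : ℝ)⁻¹ • ∑ k ∈ Finset.range n, h (σ k)))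
        atTop (nhds 0) := by
  obtain ⟨σ, hσ, hmean⟩ := hWBS _ (tendsto_dual_mIntegral_abs hh hwn hdisj)
  refine ⟨σ, hσ, squeeze_zero (fun n => mNorm_nonneg _) (fun n => ?_)
    (by simpa using hmean.const_mul 2)⟩
  have habs : ∀ k ∈ Finset.range n, MIntegrable m fun ω => |h (σ k) ω| :=
    fun k _ => (hh (σ k)).abs
  calc mNorm m ((n : ℝ)⁻¹ • ∑ k ∈ Finset.range n, h (σ k))
      ≤ mNorm m ((n : ℝ)⁻¹ • ∑ k ∈ Finset.range n, fun ω => |h (σ k) ω|) := by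
        refine mNorm_mono ((MIntegrable.finsetSum _ habs).smul _) fun ω => ?_
        simp only [Pi.smul_apply, Finset.sum_apply, smul_eq_mul, abs_mul]
        exact mul_le_mul_of_nonneg_left
          ((Finset.abs_sum_le_sum_abs _ _).trans (le_abs_self _)) (abs_nonneg _)
    _ ≤ 2 * ‖mIntegral m ((n : ℝ)⁻¹ • ∑ k ∈ Finset.range n, fun ω => |h (σ k) ω|) Set.univ‖ :=
        mNorm_le_two_mul_norm_mIntegral_univ (C := B.posCone) hpos
          (fun _ _ => B.norm_le_of_mem_posCone) ((MIntegrable.finsetSum _ habs).smul _)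
          fun ω => by
            simp only [Pi.zero_apply, Pi.smul_apply, Finset.sum_apply, smul_eq_mul]
            positivity
    _ = 2 * ‖(n : ℝ)⁻¹ • ∑ k ∈ Finset.range n, mIntegral m (fun ω => |h (σ k) ω|) Set.univ‖ := by
        rw [mIntegral_smul_finsetSum _ habs _ .univ]

/-- if `X` has the weak Banach-Saks property, `m` is positive and
`{hₙ} ⊆ L¹(m)` is weakly null with pairwise disjoint supports, then some subsequence has
arithmetic means converging to `0` in the norm of `L¹(m)`. -/
theorem statement10
    {S : Type*} [MeasurableSpace S] {μ : Measure S} [IsFiniteMeasure μ]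
    {X : Type*} [NormedAddCommGroup X] [NormedSpace ℝ X] [CompleteSpace X]
    (B : BFS S μ X) (hWBS : WeakBanachSaks X)
    {Ω : Type*} [MeasurableSpace Ω] (m : VectorMeasure Ω X)
    (hpos : ∀ A : Set Ω, MeasurableSet A → ∀ᵐ s ∂μ, 0 ≤ B.J (m A) s)
    (h : ℕ → Ω → ℝ) (hh : ∀ n, MIntegrable m (h n))
    (hwn : WeaklyNullSeq (MIntegrable m) (mNorm m) h)
    (hdisj : ∀ i j, i ≠ j → MAE m (fun ω => h i ω * h j ω = 0)) :
    ∃ σ : ℕ → ℕ, StrictMono σ ∧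
      Tendsto (fun n : ℕ => mNorm m ((n : ℝ)⁻¹ • ∑ k ∈ Finset.range n, h (σ k)))
        atTop (nhds 0) :=
  statement10_general B hWBS m hpos h hh hwn hdisj

end Paper
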